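/- Suppose that for each school s the choice function C_s is consistent with the priority profile ≿_s, and ≿_s satisfies PD. If a matching μ is C-stable, then μ is stable. -/

import Mathlib

open Finset

variable {I T S : Type*}

/-- `a` (a student or the null student `none`) is not a member of `J`. -/
def NotInOpt (a : Option I) (J : Finset I) : Prop := ∀ i ∈ a, i ∉ J

/-- Strict part `≻` of the weak priority order `ge = ≿`. -/
def StrictP (ge : Finset I → Option I → Option I → Prop) (J : Finset I) (a b : Option I) :
    Prop :=
  ge J a b ∧ ¬ ge J b a

/-- Symmetric part `∼` of the weak priority order `ge = ≿`. -/
def SimP (ge : Finset I → Option I → Option I → Prop) (J : Finset I) (a b : Option I) :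
    Prop :=
  ge J a b ∧ ge J b a

/-- `tcnt τ J a` = number of students in `J` of the same type as `a` (0 for the null student). -/
def tcnt [DecidableEq T] (τ : I → T) (J : Finset I) : Option I → ℕ
  | none => 0
  | some i => (J.filter fun x => τ x = τ i).card

/-- Completeness of each `≿ₛᴶ` on `(I∖J) ∪ {∅}`. -/
def CompleteP (q : ℕ) (ge : Finset I → Option I → Option I → Prop) : Prop :=
  ∀ J : Finset I, J.card < q → ∀ a b : Option I, NotInOpt a J → NotInOpt b J →
    ge J a b ∨ ge J b a

/-- Transitivity of each `≿ₛᴶ` on `(I∖J) ∪ {∅}`. -/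
def TransP (q : ℕ) (ge : Finset I → Option I → Option I → Prop) : Prop :=
  ∀ J : Finset I, J.card < q → ∀ a b c : Option I,
    NotInOpt a J → NotInOpt b J → NotInOpt c J → ge J a b → ge J b c → ge J a c

/-- Antisymmetry of each `≿ₛᴶ` (so that it is a linear order). -/
def AntisymP (q : ℕ) (ge : Finset I → Option I → Option I → Prop) : Prop :=
  ∀ J : Finset I, J.card < q → ∀ a b : Option I, NotInOpt a J → NotInOpt b J →
    ge J a b → ge J b a → a = b

/-- PD (preference for diversity). -/
def PD [DecidableEq T] (τ : I → T) (q : ℕ)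
    (ge : Finset I → Option I → Option I → Prop) : Prop :=
  ∀ J J' : Finset I, ∀ a b : Option I,
    J.card < q → J'.card < q →
    NotInOpt a J → NotInOpt b J → NotInOpt a J' → NotInOpt b J' →
    tcnt τ J' a ≤ tcnt τ J a → tcnt τ J b ≤ tcnt τ J' b →
    (StrictP ge J a b → StrictP ge J' a b) ∧ (ge J a b → ge J' a b)

/-- WO (within-type ordering). -/
def WO [DecidableEq T] (τ : I → T) (q : ℕ)
    (ge : Finset I → Option I → Option I → Prop) : Prop :=
  ∀ J J' : Finset I, ∀ i j : I,
    J.card < q → J'.card < q →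
    i ∉ J → j ∉ J → i ∉ J' → j ∉ J' → τ i = τ j →
    (StrictP ge J (some i) (some j) → StrictP ge J' (some i) (some j)) ∧
    (ge J (some i) (some j) → ge J' (some i) (some j))

/-- DC (distributional consistency of WO). -/
def DC [DecidableEq I] [DecidableEq T] (τ : I → T) (q : ℕ)
    (ge : Finset I → Option I → Option I → Prop) : Prop :=
  ∀ J : Finset I, ∀ i j : I, ∀ k : Option I,
    J.card + 1 < q → i ≠ j → i ∉ J → j ∉ J → NotInOpt k J →
    k ≠ some i → k ≠ some j → τ i = τ j → ge J (some i) (some j) →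
    (StrictP ge (insert i J) (some j) k → StrictP ge (insert j J) (some i) k) ∧
    (SimP ge (insert i J) (some j) k → SimP ge (insert j J) (some i) k) ∧
    (StrictP ge (insert i J) k (some j) → StrictP ge (insert j J) k (some i))

/-- The choice function `C` is consistent with the priority profile `ge = ≿ₛ`. -/
def ConsistentP [DecidableEq I] (q : ℕ)
    (ge : Finset I → Option I → Option I → Prop) (C : Finset I → Finset I) : Prop :=
  ∀ J : Finset I,
    (∀ i ∈ C J,
      (∀ j ∈ J \ C J, ge ((C J).erase i) (some i) (some j)) ∧
        ge ((C J).erase i) (some i) none) ∧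
    ((C J).card < q → (C J).card < J.card →
      ∀ j ∈ J \ C J, StrictP ge (C J) none (some j))

/-- `C` is substitutable. -/
def SubstitutableP [DecidableEq I] (C : Finset I → Finset I) : Prop :=
  ∀ (J : Finset I) (i j : I), j ∉ J → i ∈ C (insert j J) → i ∈ C J

/-- The set of students assigned to school `s` under the matching `μ`. -/
def assignedTo [Fintype I] [DecidableEq I] [DecidableEq S]
    (μ : I → Option S) (s : S) : Finset I :=
  Finset.univ.filter fun i => μ i = some s

/-- Weak preference `R_i` induced by the strict preference `P_i`. -/
def Rpref (P : I → Option S → Option S → Prop) (i : I) (a b : Option S) : Prop :=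
  P i a b ∨ a = b

/-- `μ` is non-wasteful. -/
def NonWastefulM [Fintype I] [DecidableEq I] [DecidableEq S] (q : S → ℕ)
    (ge : S → Finset I → Option I → Option I → Prop)
    (P : I → Option S → Option S → Prop) (μ : I → Option S) : Prop :=
  ∀ i s, P i (some s) (μ i) →
    StrictP (ge s) (assignedTo μ s) none (some i) ∨ (assignedTo μ s).card = q s

/-- `μ` is individually rational. -/
def IndRationalM [Fintype I] [DecidableEq I] [DecidableEq S]
    (ge : S → Finset I → Option I → Option I → Prop)
    (P : I → Option S → Option S → Prop) (μ : I → Option S) : Prop :=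
  (∀ i, Rpref P i (μ i) none) ∧
    ∀ s, ∀ i ∈ assignedTo μ s, ge s ((assignedTo μ s).erase i) (some i) none

/-- `μ` is fair: no student has justified envy. -/
def FairM [Fintype I] [DecidableEq I] [DecidableEq S]
    (ge : S → Finset I → Option I → Option I → Prop)
    (P : I → Option S → Option S → Prop) (μ : I → Option S) : Prop :=
  ¬ ∃ i j s, μ j = some s ∧ P i (some s) (μ i) ∧
      StrictP (ge s) ((assignedTo μ s).erase j) (some i) (some j)

/-- `μ` is stable. -/
def StableM [Fintype I] [DecidableEq I] [DecidableEq S] (q : S → ℕ)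
    (ge : S → Finset I → Option I → Option I → Prop)
    (P : I → Option S → Option S → Prop) (μ : I → Option S) : Prop :=
  NonWastefulM q ge P μ ∧ IndRationalM ge P μ ∧ FairM ge P μ

/-- `μ` is `C`-stable. -/
def CStableM [Fintype I] [DecidableEq I] [DecidableEq S]
    (C : S → Finset I → Finset I)
    (P : I → Option S → Option S → Prop) (μ : I → Option S) : Prop :=
  (∀ i, Rpref P i (μ i) none) ∧
    (∀ s, assignedTo μ s = C s (assignedTo μ s)) ∧
    ¬ ∃ s i, μ i ≠ some s ∧ P i (some s) (μ i) ∧ i ∈ C s (insert i (assignedTo μ s))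

/-!
Fix a school `s`, let `J = μ(s)`, and let `i` be a student who prefers `s` to `μ(i)`. C-stability
says that `C' = C_s(J ∪ {i})` rejects `i`, so `C' ⊆ J`. If `|C'| < q_s`, consistency gives
`∅ ≻ i` relative to `C'`, and PD carries this comparison to every set containing at least as many
students of `i`'s type as `C'`: to `J` (non-wastefulness) and, in the fairness argument, to
`J ∖ {j}`. When this transfer to `J ∖ {j}` is blocked, or when `C' = J`, the student `j` is kept
in `C'` and `C' ∖ {j}` has as many students of `j`'s type as `J ∖ {j}`; consistency then ranks
`j` above `i` relative to `C' ∖ {j}`, and PD carries that to `J ∖ {j}`.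
-/

lemma notInOpt_none {J : Finset I} : NotInOpt (none : Option I) J := by
  simp [NotInOpt]

lemma notInOpt_some {J : Finset I} {i : I} (h : i ∉ J) : NotInOpt (some i) J := by
  simpa [NotInOpt] using h

section TypeCount

variable [DecidableEq T] (τ : I → T) {C J : Finset I} {i j : I}

lemma tcnt_mono (h : C ⊆ J) (a : Option I) : tcnt τ C a ≤ tcnt τ J a := by
  cases a with
  | none => exact le_rfl
  | some i => exact card_le_card (filter_subset_filter _ h)

lemma tcnt_congr (h : τ i = τ j) : tcnt τ J (some i) = tcnt τ J (some j) := by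
  simp [tcnt, h]

lemma tcnt_erase_of_ne [DecidableEq I] (h : τ j ≠ τ i) : tcnt τ (J.erase j) (some i) = tcnt τ J (some i) := by
  simp [tcnt, filter_erase, h]

lemma tcnt_erase_add_one [DecidableEq I] (hj : j ∈ J) (h : τ j = τ i) :
    tcnt τ (J.erase j) (some i) + 1 = tcnt τ J (some i) := by
  simpa [tcnt, filter_erase] using card_erase_add_one (mem_filter.2 ⟨hj, h⟩)

lemma mem_and_tcnt_erase_le_of_lt [DecidableEq I] (hCJ : C ⊆ J)
    (h : tcnt τ (J.erase j) (some i) < tcnt τ C (some i)) :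
    j ∈ C ∧ tcnt τ (J.erase j) (some j) ≤ tcnt τ (C.erase j) (some j) := by
  have hjC : j ∈ C := by
    by_contra hjC
    exact (tcnt_mono τ (subset_erase.2 ⟨hCJ, hjC⟩) _).not_gt h
  have hτ : τ j = τ i := by
    by_contra hτ
    rw [tcnt_erase_of_ne τ hτ] at h
    exact (tcnt_mono τ hCJ _).not_gt h
  refine ⟨hjC, ?_⟩
  rw [tcnt_congr τ hτ, tcnt_congr τ hτ]
  have := tcnt_erase_add_one τ hjC hτ
  omega

end TypeCount

namespace ConsistentP

variable [DecidableEq I] {q : ℕ} {ge : Finset I → Option I → Option I → Prop}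
  {C : Finset I → Finset I} {J : Finset I} {i j : I}

lemma ge_erase_none_of_fixed (hcons : ConsistentP q ge C) (hfix : C J = J) (hi : i ∈ J) :
    ge (J.erase i) (some i) none := by
  simpa [hfix] using ((hcons J).1 i (by rwa [hfix])).2

lemma strictP_none_of_rejected (hcons : ConsistentP q ge C)
    (hsub : C (insert i J) ⊆ insert i J) (hq : (C (insert i J)).card < q) (hiJ : i ∉ J)
    (hi : i ∉ C (insert i J)) : StrictP ge (C (insert i J)) none (some i) := by
  refine (hcons _).2 hq ?_ i (mem_sdiff.2 ⟨mem_insert_self _ _, hi⟩)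
  rw [card_insert_of_notMem hiJ]
  exact Nat.lt_succ_of_le (card_le_card ((subset_insert_iff_of_notMem hi).1 hsub))

variable [DecidableEq T] {τ : I → T}

lemma strictP_none_of_card_lt (hcons : ConsistentP q ge C) (hPD : PD τ q ge)
    (hsub : C (insert i J) ⊆ insert i J) (hJ : J.card < q) (hiJ : i ∉ J)
    (hi : i ∉ C (insert i J)) : StrictP ge J none (some i) := by
  have hCJ := (subset_insert_iff_of_notMem hi).1 hsub
  have hq := (card_le_card hCJ).trans_lt hJ
  exact (hPD _ J none (some i) hq hJ notInOpt_none (notInOpt_some hi) notInOpt_none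
    (notInOpt_some hiJ) le_rfl (tcnt_mono τ hCJ _)).1
    (hcons.strictP_none_of_rejected hsub hq hiJ hi)

lemma not_strictP_erase_of_rejected (hcons : ConsistentP q ge C) (hPD : PD τ q ge)
    (htr : TransP q ge) (hsub : C (insert i J) ⊆ insert i J)
    (hcardC : (C (insert i J)).card ≤ q) (hJ : J.card ≤ q) (hfix : C J = J) (hj : j ∈ J)
    (hiJ : i ∉ J) (hi : i ∉ C (insert i J)) : ¬ StrictP ge (J.erase j) (some i) (some j) := by
  intro hij
  set C' := C (insert i J)
  have hCJ : C' ⊆ J := (subset_insert_iff_of_notMem hi).1 hsub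
  have hJj : (J.erase j).card < q := (card_erase_lt_of_mem hj).trans_le hJ
  have hiJj : NotInOpt (some i) (J.erase j) := notInOpt_some fun h => hiJ (mem_of_mem_erase h)
  have hjJj : NotInOpt (some j) (J.erase j) := notInOpt_some (notMem_erase j J)
  have hj_ge_i (hjC : j ∈ C')
      (hcnt : tcnt τ (J.erase j) (some j) ≤ tcnt τ (C'.erase j) (some j)) :
      ge (J.erase j) (some j) (some i) :=
    (hPD (C'.erase j) (J.erase j) (some j) (some i) ((card_erase_lt_of_mem hjC).trans_le hcardC)
      hJj (notInOpt_some (notMem_erase _ _)) (notInOpt_some fun h => hi (mem_of_mem_erase h))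
      hjJj hiJj hcnt (tcnt_mono τ (erase_subset_erase j hCJ) _)).2
      (((hcons _).1 j hjC).1 i (mem_sdiff.2 ⟨mem_insert_self _ _, hi⟩))
  by_cases hC'J : C' = J
  · exact hij.2 (hj_ge_i (hC'J ▸ hj) (by rw [hC'J]))
  have hq : C'.card < q := (card_lt_card (ssubset_of_subset_of_ne hCJ hC'J)).trans_le hJ
  by_cases hcnt : tcnt τ C' (some i) ≤ tcnt τ (J.erase j) (some i)
  · have h0i := (hPD C' (J.erase j) none (some i) hq hJj notInOpt_none (notInOpt_some hi)
      notInOpt_none hiJj le_rfl hcnt).1 (hcons.strictP_none_of_rejected hsub hq hiJ hi)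
    exact h0i.2 (htr _ hJj _ _ _ hiJj hjJj notInOpt_none hij.1
      (hcons.ge_erase_none_of_fixed hfix hj))
  · obtain ⟨hjC, hcnt'⟩ := mem_and_tcnt_erase_le_of_lt τ hCJ (not_le.1 hcnt)
    exact hij.2 (hj_ge_i hjC hcnt')

end ConsistentP

theorem lemma3_general [Fintype I] [DecidableEq I] [DecidableEq T] [DecidableEq S]
    (τ : I → T) (q : S → ℕ)
    (ge : S → Finset I → Option I → Option I → Prop)
    (htr : ∀ s, TransP (q s) (ge s))
    (hPD : ∀ s, PD τ (q s) (ge s))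
    (C : S → Finset I → Finset I)
    (hsub : ∀ s J, C s J ⊆ J) (hcardC : ∀ s J, (C s J).card ≤ q s)
    (hcons : ∀ s, ConsistentP (q s) (ge s) (C s))
    (P : I → Option S → Option S → Prop)
    (hPasym : ∀ i a b, P i a b → ¬ P i b a)
    (μ : I → Option S) (hcap : ∀ s, (assignedTo μ s).card ≤ q s)
    (h : CStableM C P μ) :
    StableM q ge P μ := by
  obtain ⟨hIR, hfix, hblock⟩ := h
  have hrej : ∀ i s, P i (some s) (μ i) →
      i ∉ assignedTo μ s ∧ i ∉ C s (insert i (assignedTo μ s)) := by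
    intro i s hP
    have hne : μ i ≠ some s := fun he => hPasym i _ _ (he ▸ hP) (he ▸ hP)
    exact ⟨by simpa [assignedTo] using hne, fun hi => hblock ⟨s, i, hne, hP, hi⟩⟩
  refine ⟨fun i s hP => ?_, ⟨hIR, fun s i hi => ?_⟩, ?_⟩
  · refine (eq_or_lt_of_le (hcap s)).symm.imp_left fun hJ => ?_
    exact (hcons s).strictP_none_of_card_lt (hPD s) (hsub s _) hJ (hrej i s hP).1 (hrej i s hP).2
  · exact (hcons s).ge_erase_none_of_fixed (hfix s).symm hi
  · rintro ⟨i, j, s, hjs, hP, hij⟩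
    exact (hcons s).not_strictP_erase_of_rejected (hPD s) (htr s) (hsub s _) (hcardC s _)
      (hcap s) (hfix s).symm (by simpa [assignedTo] using hjs) (hrej i s hP).1 (hrej i s hP).2 hij

/-- **Lemma 3.** If each `Cₛ` is consistent with `≿ₛ` and each `≿ₛ` satisfies PD, then every
`C`-stable matching is stable. -/
theorem lemma3 [Fintype I] [DecidableEq I] [DecidableEq T] [DecidableEq S]
    (τ : I → T) (q : S → ℕ)
    (ge : S → Finset I → Option I → Option I → Prop)
    (hcomp : ∀ s, CompleteP (q s) (ge s)) (htr : ∀ s, TransP (q s) (ge s))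
    (hPD : ∀ s, PD τ (q s) (ge s))
    (C : S → Finset I → Finset I)
    (hsub : ∀ s J, C s J ⊆ J) (hcardC : ∀ s J, (C s J).card ≤ q s)
    (hcons : ∀ s, ConsistentP (q s) (ge s) (C s))
    (P : I → Option S → Option S → Prop)
    (hPasym : ∀ i a b, P i a b → ¬ P i b a)
    (hPtrans : ∀ i a b c, P i a b → P i b c → P i a c)
    (hPtotal : ∀ i a b, a ≠ b → P i a b ∨ P i b a)
    (μ : I → Option S) (hcap : ∀ s, (assignedTo μ s).card ≤ q s)
    (h : CStableM C P μ) :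
    StableM q ge P μ :=
  lemma3_general τ q ge htr hPD C hsub hcardC hcons P hPasym μ hcap h
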